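/- (First claim of Proposition 1.) Let 0 < q < 1, s ≥ 1, and N = 2^s. Then (p̄_s(q)/N) · (H₁^s(q) − H₀^s(q)) = (p̄_s(q)/N) · ∑_{i=0}^{s−1} { ∏_{j=1}^{i} (1 − 2q̄_{s−j+1}(q)) } · (1 − h(q̄_{s−i}(q))) =: f(q). That is, the first-round rate term of the polarization-based OT protocol with block length N admits the stated closed form. -/

import Mathlib

open Finset

/-- Hamming weight of a binary string `e ∈ {0,1}^n`. -/
def wt {n : ℕ} (e : Fin n → Bool) : ℕ := (Finset.univ.filter fun i => e i = true).card

/-- i.i.d. Bernoulli(q) probability of the binary string `e ∈ {0,1}^n`. -/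
noncomputable def Pq (q : ℝ) {n : ℕ} (e : Fin n → Bool) : ℝ :=
  q ^ wt e * (1 - q) ^ (n - wt e)

/-- `p̄_j(q) = (1 − (1−2q)^{2^j})/2`. -/
noncomputable def pbar (q : ℝ) (j : ℕ) : ℝ := (1 - (1 - 2 * q) ^ (2 ^ j)) / 2

/-- `q̄_j(q) = p̄_{j−1}(q)²/(1 − p̄_j(q))`. -/
noncomputable def qbar (q : ℝ) (j : ℕ) : ℝ := (pbar q (j - 1)) ^ 2 / (1 - pbar q j)

/-- Binary entropy function (base 2), with `h(0) = h(1) = 0`. -/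
noncomputable def binEnt (x : ℝ) : ℝ := -(x * Real.logb 2 x) - (1 - x) * Real.logb 2 (1 - x)

/-- `Π_b^j(q)`: probability that an i.i.d. Bernoulli(q) vector of length `2^j` has parity `b`. -/
noncomputable def Pib (q : ℝ) (j : ℕ) (b : ℕ) : ℝ := if b = 1 then pbar q j else 1 - pbar q j

/-- `H_b^j(q)`: Shannon entropy (base 2) of an i.i.d. Bernoulli(q) vector of length `2^j`
conditioned on its parity being `b`. -/
noncomputable def Hcond (q : ℝ) (j : ℕ) (b : ℕ) : ℝ :=
  -∑ e ∈ Finset.univ.filter (fun e : Fin (2 ^ j) → Bool => wt e % 2 = b),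
      (Pq q e / Pib q j b) * Real.logb 2 (Pq q e / Pib q j b)

open Real

/-! Write `ρ = 1 - 2q`. Parity classes are separated by signed sums `∑ (-1)^{w(e)} F(e)`, and
since both `P_q` and `log P_q` factor over coordinates, the plain and signed sums of `P_q` and of
`P_q log P_q` over `{0,1}^n` are explicit (`1`, `ρ^n`, `n·(…)`, `n·(…)·ρ^{n-1}`). This yields
`H₁^s − H₀^s` in closed form as a function of `x = ρ^{2^s}`. Passing from `s` to `s + 1` squares
`x`, which multiplies the rational part of the closed form by `1 − 2q̄_{s+1} = 2x/(1+x²)` and adds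
`1 − h(q̄_{s+1})` to the logarithmic part; unrolling this recursion gives the sum. -/

lemma prod_ite_eq_pow_wt {M : Type*} [CommMonoid M] {n : ℕ} (a c : M) (e : Fin n → Bool) :
    ∏ i, (if e i then a else c) = a ^ wt e * c ^ (n - wt e) := by
  have hcard := card_filter_add_card_filter_not (s := univ) (fun i => e i = true)
  rw [card_univ, Fintype.card_fin] at hcard
  have hfalse : #{i | ¬e i = true} = n - wt e := by rw [wt]; omega
  rw [prod_ite, prod_const, prod_const, hfalse, wt]

lemma sum_pow_wt_mul_pow {R : Type*} [CommSemiring R] (n : ℕ) (a c : R) :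
    ∑ e : Fin n → Bool, a ^ wt e * c ^ (n - wt e) = (a + c) ^ n := by
  calc ∑ e : Fin n → Bool, a ^ wt e * c ^ (n - wt e)
      = ∑ e : Fin n → Bool, ∏ i, (if e i then a else c) := by simp_rw [prod_ite_eq_pow_wt]
    _ = ∏ _i : Fin n, ∑ b : Bool, (if b then a else c) :=
        (Fintype.prod_sum fun _ (b : Bool) => if b then a else c).symm
    _ = (a + c) ^ n := by simp

lemma prod_ite_eq_mul_pow {ι M : Type*} [Fintype ι] [DecidableEq ι] [CommMonoid M]
    (i : ι) (u v : M) :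
    ∏ k, (if k = i then u else v) = u * v ^ (Fintype.card ι - 1) := by
  rw [Fintype.prod_eq_mul_prod_compl i, if_pos rfl,
    prod_congr rfl fun k hk => if_neg (by simpa using hk), prod_const, card_compl, card_singleton]

lemma sum_prod_mul_sum_apply {ι α R : Type*} [Fintype ι] [DecidableEq ι] [Fintype α]
    [CommSemiring R] (g φ : α → R) :
    ∑ x : ι → α, (∏ k, g (x k)) * ∑ i, φ (x i)
      = Fintype.card ι * (∑ a, g a * φ a) * (∑ a, g a) ^ (Fintype.card ι - 1) := by
  have hslice : ∀ i, ∑ x : ι → α, (∏ k, g (x k)) * φ (x i)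
      = (∑ a, g a * φ a) * (∑ a, g a) ^ (Fintype.card ι - 1) := fun i => by
    calc ∑ x : ι → α, (∏ k, g (x k)) * φ (x i)
        = ∑ x : ι → α, ∏ k, (if k = i then g (x k) * φ (x k) else g (x k)) := by
          refine sum_congr rfl fun x _ => ?_
          have hφ : φ (x i) = ∏ k, if k = i then φ (x k) else 1 := by simp
          rw [hφ, ← prod_mul_distrib]
          exact prod_congr rfl fun k _ => by split_ifs <;> simp
      _ = ∏ k, ∑ a, (if k = i then g a * φ a else g a) :=
          (Fintype.prod_sum fun k a => if k = i then g a * φ a else g a).symm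
      _ = _ := by
          rw [← prod_ite_eq_mul_pow i]
          exact prod_congr rfl fun k _ => by split_ifs <;> rfl
  rw [sum_congr rfl fun x _ => mul_sum _ _ _, sum_comm, sum_congr rfl fun i _ => hslice i,
    sum_const, card_univ, nsmul_eq_mul, mul_assoc]

lemma two_mul_sum_filter_mod_two {ι R : Type*} [CommRing R] (S : Finset ι) (w : ι → ℕ) (G : ι → R)
    {b : ℕ} (hb : b < 2) :
    2 * ∑ i ∈ S with w i % 2 = b, G i = ∑ i ∈ S, G i + (-1) ^ b * ∑ i ∈ S, (-1) ^ w i * G i := by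
  rw [sum_filter, mul_sum, mul_sum, ← sum_add_distrib]
  refine sum_congr rfl fun i _ => ?_
  rw [neg_one_pow_eq_pow_mod_two (w i)]
  have hw : w i % 2 < 2 := Nat.mod_lt _ two_pos
  interval_cases b <;> interval_cases w i % 2 <;> simp <;> ring

lemma neg_sum_div_mul_logb_div {ι : Type*} (B : ℝ) (S : Finset ι) (p : ι → ℝ)
    (hp : ∀ i ∈ S, p i ≠ 0) {P : ℝ} (hP : ∑ i ∈ S, p i = P) (hP0 : P ≠ 0) :
    -∑ i ∈ S, p i / P * logb B (p i / P) = -(∑ i ∈ S, p i * logb B (p i)) / P + logb B P := by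
  have hterm : ∀ i ∈ S, p i / P * logb B (p i / P) = p i * logb B (p i) / P - logb B P * p i / P :=
    fun i hi => by rw [logb_div (hp i hi) hP0]; ring
  rw [sum_congr rfl hterm, sum_sub_distrib, ← sum_div, ← sum_div, ← mul_sum, hP]
  field_simp
  ring

lemma sum_range_succ_prod_sub {R : Type*} [CommRing R] (u v : ℕ → R) (s : ℕ) :
    ∑ i ∈ range (s + 1), (∏ j ∈ range i, u (s + 1 - j)) * v (s + 1 - i)
      = u (s + 1) * ∑ i ∈ range s, (∏ j ∈ range i, u (s - j)) * v (s - i) + v (s + 1) := by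
  rw [sum_range_succ', mul_sum, prod_range_zero, one_mul, Nat.sub_zero]
  congr 1
  refine sum_congr rfl fun i _ => ?_
  simp only [prod_range_succ', Nat.add_sub_add_right, Nat.sub_zero]
  ring

lemma one_sub_binEnt_eq {x : ℝ} (hx : |x| < 1) :
    1 - binEnt ((1 - x) ^ 2 / (2 * (1 + x ^ 2)))
      = logb 2 ((1 - x ^ 2) / (1 + x ^ 2)) - 2 * x / (1 + x ^ 2) * logb 2 ((1 - x) / (1 + x)) := by
  obtain ⟨hx1, hx2⟩ := abs_lt.1 hx
  have hm : 0 < 1 - x := by linarith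
  have hp : 0 < 1 + x := by linarith
  have hs : 0 < 1 + x ^ 2 := by positivity
  have hcompl : 1 - (1 - x) ^ 2 / (2 * (1 + x ^ 2)) = (1 + x) ^ 2 / (2 * (1 + x ^ 2)) := by
    field_simp; ring
  have hlog : ∀ y : ℝ, 0 < y → logb 2 (y ^ 2 / (2 * (1 + x ^ 2)))
      = 2 * logb 2 y - 1 - logb 2 (1 + x ^ 2) := fun y hy => by
    rw [logb_div (by positivity) (by positivity), logb_mul two_ne_zero hs.ne', logb_pow,
      logb_self_eq_one one_lt_two]
    push_cast; ring
  have hsq : 1 - x ^ 2 = (1 - x) * (1 + x) := by ring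
  unfold binEnt
  rw [hcompl, hlog _ hm, hlog _ hp, hsq, logb_div (by positivity) hs.ne',
    logb_mul hm.ne' hp.ne', logb_div hm.ne' hp.ne']
  field_simp
  ring

section BernoulliVector

variable {q : ℝ}

lemma Pq_eq_prod {n : ℕ} (e : Fin n → Bool) : Pq q e = ∏ i, (if e i then q else 1 - q) :=
  (prod_ite_eq_pow_wt q (1 - q) e).symm

lemma Pq_pos (hq0 : 0 < q) (hq1 : q < 1) {n : ℕ} (e : Fin n → Bool) : 0 < Pq q e :=
  mul_pos (pow_pos hq0 _) (pow_pos (sub_pos.2 hq1) _)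

lemma logb_Pq (hq0 : 0 < q) (hq1 : q < 1) {n : ℕ} (e : Fin n → Bool) :
    logb 2 (Pq q e) = ∑ i, logb 2 (if e i then q else 1 - q) := by
  rw [Pq_eq_prod, logb_prod]
  intro i _
  split_ifs <;> linarith

lemma sum_pow_wt_mul_pow_mul_logb_Pq (hq0 : 0 < q) (hq1 : q < 1) (n : ℕ) (a c : ℝ) :
    ∑ e : Fin n → Bool, a ^ wt e * c ^ (n - wt e) * logb 2 (Pq q e)
      = n * (a * logb 2 q + c * logb 2 (1 - q)) * (a + c) ^ (n - 1) := by
  have := sum_prod_mul_sum_apply (ι := Fin n) (fun b : Bool => if b then a else c)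
    (fun b : Bool => logb 2 (if b then q else 1 - q))
  simpa only [prod_ite_eq_pow_wt, ← logb_Pq hq0 hq1, Fintype.sum_bool, if_true,
    Bool.false_eq_true, if_false, Fintype.card_fin] using this

lemma two_mul_sum_Pq_of_parity (n : ℕ) {b : ℕ} (hb : b < 2) :
    2 * ∑ e : Fin n → Bool with wt e % 2 = b, Pq q e = 1 + (-1) ^ b * (1 - 2 * q) ^ n := by
  have hsigned : ∀ e : Fin n → Bool, (-1) ^ wt e * Pq q e = (-q) ^ wt e * (1 - q) ^ (n - wt e) :=
    fun e => by rw [Pq, neg_pow]; ring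
  rw [two_mul_sum_filter_mod_two _ _ _ hb, Fintype.sum_congr _ _ hsigned]
  simp only [Pq, sum_pow_wt_mul_pow]
  ring

lemma two_mul_sum_Pq_mul_logb_of_parity (hq0 : 0 < q) (hq1 : q < 1) (n : ℕ) {b : ℕ} (hb : b < 2) :
    2 * ∑ e : Fin n → Bool with wt e % 2 = b, Pq q e * logb 2 (Pq q e)
      = n * (q * logb 2 q + (1 - q) * logb 2 (1 - q))
        + (-1) ^ b * (n * ((1 - q) * logb 2 (1 - q) - q * logb 2 q) * (1 - 2 * q) ^ (n - 1)) := by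
  have hsigned : ∀ e : Fin n → Bool, (-1) ^ wt e * (Pq q e * logb 2 (Pq q e))
      = (-q) ^ wt e * (1 - q) ^ (n - wt e) * logb 2 (Pq q e) :=
    fun e => by rw [Pq, neg_pow]; ring
  have hunsigned : ∑ e : Fin n → Bool, Pq q e * logb 2 (Pq q e)
      = n * (q * logb 2 q + (1 - q) * logb 2 (1 - q)) * (q + (1 - q)) ^ (n - 1) :=
    sum_pow_wt_mul_pow_mul_logb_Pq hq0 hq1 n q (1 - q)
  rw [two_mul_sum_filter_mod_two _ _ _ hb, Fintype.sum_congr _ _ hsigned, hunsigned,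
    sum_pow_wt_mul_pow_mul_logb_Pq hq0 hq1]
  ring

lemma abs_one_sub_two_mul_pow_lt_one (hq0 : 0 < q) (hq1 : q < 1) {n : ℕ} (hn : n ≠ 0) :
    |(1 - 2 * q) ^ n| < 1 := by
  rw [abs_pow]
  exact pow_lt_one₀ (abs_nonneg _) (abs_lt.2 ⟨by linarith, by linarith⟩) hn

lemma Pib_eq (j : ℕ) {b : ℕ} (hb : b < 2) :
    Pib q j b = (1 + (-1) ^ b * (1 - 2 * q) ^ 2 ^ j) / 2 := by
  interval_cases b <;> simp [Pib, pbar] <;> ring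

lemma Pib_pos (hq0 : 0 < q) (hq1 : q < 1) (j : ℕ) {b : ℕ} (hb : b < 2) : 0 < Pib q j b := by
  have hx := abs_lt.1 (abs_one_sub_two_mul_pow_lt_one hq0 hq1 (pow_ne_zero j two_ne_zero))
  rw [Pib_eq j hb]
  interval_cases b <;> simp <;> linarith

lemma Hcond_eq (hq0 : 0 < q) (hq1 : q < 1) (j : ℕ) {b : ℕ} (hb : b < 2) :
    Hcond q j b
      = -(∑ e : Fin (2 ^ j) → Bool with wt e % 2 = b, Pq q e * logb 2 (Pq q e)) / Pib q j b
        + logb 2 (Pib q j b) := by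
  have hmass : ∑ e : Fin (2 ^ j) → Bool with wt e % 2 = b, Pq q e = Pib q j b := by
    have := two_mul_sum_Pq_of_parity (q := q) (2 ^ j) hb
    rw [Pib_eq j hb]
    linarith
  exact neg_sum_div_mul_logb_div 2 _ _ (fun e _ => (Pq_pos hq0 hq1 e).ne') hmass
    (Pib_pos hq0 hq1 j hb).ne'

noncomputable def parityEntropyGap (q : ℝ) (s : ℕ) : ℝ :=
  4 * q * (1 - q) * (logb 2 (1 - q) - logb 2 q) * (2 ^ s * (1 - 2 * q) ^ (2 ^ s - 1))
      / (1 - ((1 - 2 * q) ^ 2 ^ s) ^ 2)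
    + logb 2 ((1 - (1 - 2 * q) ^ 2 ^ s) / (1 + (1 - 2 * q) ^ 2 ^ s))

lemma Hcond_one_sub_Hcond_zero (hq0 : 0 < q) (hq1 : q < 1) (s : ℕ) :
    Hcond q s 1 - Hcond q s 0 = parityEntropyGap q s := by
  have h1 := two_mul_sum_Pq_mul_logb_of_parity hq0 hq1 (2 ^ s) one_lt_two
  have h0 := two_mul_sum_Pq_mul_logb_of_parity hq0 hq1 (2 ^ s) two_pos
  rw [Hcond_eq hq0 hq1 s one_lt_two, Hcond_eq hq0 hq1 s two_pos, add_sub_add_comm,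
    ← logb_div (Pib_pos hq0 hq1 s one_lt_two).ne' (Pib_pos hq0 hq1 s two_pos).ne',
    Pib_eq s one_lt_two, Pib_eq s two_pos, div_div_eq_mul_div, div_div_eq_mul_div, neg_mul, neg_mul,
    mul_comm _ (2 : ℝ), mul_comm _ (2 : ℝ), h1, h0, parityEntropyGap]
  simp only [pow_one, pow_zero, neg_one_mul, one_mul, ← sub_eq_add_neg, Nat.cast_pow,
    Nat.cast_ofNat]
  have habs := abs_one_sub_two_mul_pow_lt_one hq0 hq1 (pow_ne_zero s two_ne_zero)
  have hm : 1 - (1 - 2 * q) ^ 2 ^ s ≠ 0 := by linarith [(abs_lt.1 habs).2]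
  have hp : 1 + (1 - 2 * q) ^ 2 ^ s ≠ 0 := by linarith [(abs_lt.1 habs).1]
  have hmp : 1 - ((1 - 2 * q) ^ 2 ^ s) ^ 2 ≠ 0 :=
    (sub_pos.2 ((sq_lt_one_iff_abs_lt_one _).2 habs)).ne'
  have hpow : (1 - 2 * q) ^ 2 ^ s = (1 - 2 * q) * (1 - 2 * q) ^ (2 ^ s - 1) := by
    rw [← pow_succ', Nat.sub_add_cancel Nat.one_le_two_pow]
  congr 1
  · rw [div_sub_div _ _ hm hp, div_eq_div_iff (mul_ne_zero hm hp) hmp, hpow]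
    ring
  · rw [div_div_div_cancel_right₀ two_ne_zero]

lemma one_sub_two_mul_pow_two_pow_succ (s : ℕ) :
    (1 - 2 * q) ^ 2 ^ (s + 1) = ((1 - 2 * q) ^ 2 ^ s) ^ 2 := by
  rw [pow_succ, pow_mul]

lemma qbar_succ (s : ℕ) :
    qbar q (s + 1) = (1 - (1 - 2 * q) ^ 2 ^ s) ^ 2 / (2 * (1 + ((1 - 2 * q) ^ 2 ^ s) ^ 2)) := by
  rw [qbar, pbar, pbar, Nat.add_sub_cancel, one_sub_two_mul_pow_two_pow_succ]
  generalize (1 - 2 * q) ^ 2 ^ s = x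
  have hden : 1 - (1 - x ^ 2) / 2 = (1 + x ^ 2) / 2 := by ring
  have : 1 + x ^ 2 ≠ 0 := by positivity
  rw [hden]
  field_simp

lemma parityEntropyGap_zero (hq0 : 0 < q) (hq1 : q < 1) : parityEntropyGap q 0 = 0 := by
  have hq1' : 0 < 1 - q := sub_pos.2 hq1
  have hlog : (1 - (1 - 2 * q)) / (1 + (1 - 2 * q)) = q / (1 - q) := by
    rw [div_eq_div_iff (by linarith) hq1'.ne']; ring
  have hden : 1 - (1 - 2 * q) ^ 2 = 4 * q * (1 - q) := by ring
  simp only [parityEntropyGap, pow_zero, pow_one, Nat.sub_self, one_mul, hlog, hden,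
    logb_div hq0.ne' hq1'.ne']
  field_simp
  ring

lemma parityEntropyGap_succ (hq0 : 0 < q) (hq1 : q < 1) (s : ℕ) :
    parityEntropyGap q (s + 1)
      = (1 - 2 * qbar q (s + 1)) * parityEntropyGap q s + (1 - binEnt (qbar q (s + 1))) := by
  have habs := abs_one_sub_two_mul_pow_lt_one hq0 hq1 (pow_ne_zero s two_ne_zero)
  have hexp : (1 - 2 * q) ^ (2 ^ (s + 1) - 1)
      = (1 - 2 * q) ^ 2 ^ s * (1 - 2 * q) ^ (2 ^ s - 1) := by
    rw [← pow_add, pow_succ, mul_two, Nat.add_sub_assoc Nat.one_le_two_pow]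
  rw [qbar_succ, one_sub_binEnt_eq habs, parityEntropyGap, parityEntropyGap, hexp,
    one_sub_two_mul_pow_two_pow_succ]
  generalize (1 - 2 * q) ^ 2 ^ s = x at habs ⊢
  have hsq : x ^ 2 < 1 := (sq_lt_one_iff_abs_lt_one x).2 habs
  have hm : 1 - x ^ 2 ≠ 0 := (sub_pos.2 hsq).ne'
  have hp : 1 + x ^ 2 ≠ 0 := by positivity
  have hcoef : 1 - 2 * ((1 - x) ^ 2 / (2 * (1 + x ^ 2))) = 2 * x / (1 + x ^ 2) := by
    field_simp; ring
  have hfactor : 1 - (x ^ 2) ^ 2 = (1 - x ^ 2) * (1 + x ^ 2) := by ring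
  rw [hcoef, hfactor]
  field_simp
  ring

lemma parityEntropyGap_eq_sum (hq0 : 0 < q) (hq1 : q < 1) (s : ℕ) :
    parityEntropyGap q s = ∑ i ∈ range s,
      (∏ j ∈ range i, (1 - 2 * qbar q (s - j))) * (1 - binEnt (qbar q (s - i))) := by
  induction s with
  | zero => rw [parityEntropyGap_zero hq0 hq1, range_zero, sum_empty]
  | succ s ih =>
    rw [parityEntropyGap_succ hq0 hq1, ih,
      sum_range_succ_prod_sub (fun k => 1 - 2 * qbar q k) (fun k => 1 - binEnt (qbar q k))]

end BernoulliVector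

theorem first_round_rate_closed_form_general (q : ℝ) (hq0 : 0 < q) (hq1 : q < 1) (s : ℕ) :
    pbar q s / (2 ^ s : ℝ) * (Hcond q s 1 - Hcond q s 0)
      = pbar q s / (2 ^ s : ℝ) *
          ∑ i ∈ Finset.range s,
            (∏ j ∈ Finset.range i, (1 - 2 * qbar q (s - j))) * (1 - binEnt (qbar q (s - i))) := by
  rw [Hcond_one_sub_Hcond_zero hq0 hq1, parityEntropyGap_eq_sum hq0 hq1]

/-- First claim of Proposition 1: for `0 < q < 1`, `s ≥ 1`, `N = 2^s`,
`(p̄_s(q)/N)·(H₁^s(q) − H₀^s(q))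
  = (p̄_s(q)/N)·∑_{i=0}^{s−1} {∏_{j=1}^{i} (1 − 2q̄_{s−j+1}(q))}·(1 − h(q̄_{s−i}(q)))`. -/
theorem first_round_rate_closed_form (q : ℝ) (hq0 : 0 < q) (hq1 : q < 1) (s : ℕ) (hs : 1 ≤ s) :
    pbar q s / (2 ^ s : ℝ) * (Hcond q s 1 - Hcond q s 0)
      = pbar q s / (2 ^ s : ℝ) *
          ∑ i ∈ Finset.range s,
            (∏ j ∈ Finset.range i, (1 - 2 * qbar q (s - j))) * (1 - binEnt (qbar q (s - i))) :=
  first_round_rate_closed_form_general q hq0 hq1 s
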